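/- arXiv:2203.02917 — 2 statements merged into one kernel-verified Lean document; each statement's English description precedes it below -/
import Mathlib

section
/- The Thue-Morse word is recurrent: every finite factor of t occurs infinitely often, i.e., for every occurrence position i and length n, and every bound N, there exists j > N with t(j+k) = t(i+k) for all k < n. -/
open scoped Classical

/-- The Thue-Morse word: parity of the binary digit sum. -/
def tm (n : ℕ) : ℕ := (Nat.digits 2 n).sum % 2

/-- `t[j..j+n-1] = t[i..i+n-1]` : an occurrence at `j` of the factor `t[i..i+n-1]`. -/
def feq (i j n : ℕ) : Prop := ∀ k < n, tm (j + k) = tm (i + k)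

/-- `t[j..j+n-1]` is the binary complement of `t[i..i+n-1]`. -/
def feqc (i j n : ℕ) : Prop := ∀ k < n, tm (j + k) = 1 - tm (i + k)

/-- Positions of occurrences of `x = t[i..i+n-1]` or its complement. -/
def occSet (i n : ℕ) : ℕ → Prop := fun j => feq i j n ∨ feqc i j n

/-- The intertwining sequence of `x = t[i..i+n-1]`: at index `m`, the label of the
`m`-th (in increasing order of position) occurrence of `x` or its complement;
`0` codes `A` (an occurrence of `x`), `1` codes `B` (an occurrence of the complement). -/
noncomputable def itw (i n m : ℕ) : ℕ :=
  if feq i (Nat.nth (occSet i n) m) n then 0 else 1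

/-- The intertwining sequence is `(AB)^ω`. -/
def ABpat (i n : ℕ) : Prop := ∀ m, itw i n m = m % 2

/-- The intertwining sequence is `(BA)^ω`. -/
def BApat (i n : ℕ) : Prop := ∀ m, itw i n m = (m + 1) % 2

/-- The intertwining sequence is `(ABBA)^ω`. -/
def ABBApat (i n : ℕ) : Prop :=
  ∀ m, itw i n m = if m % 4 = 0 ∨ m % 4 = 3 then 0 else 1

/-- The intertwining sequence is `(BAAB)^ω`. -/
def BAABpat (i n : ℕ) : Prop :=
  ∀ m, itw i n m = if m % 4 = 0 ∨ m % 4 = 3 then 1 else 0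

/-- The length-`n` factor of the Thue-Morse word starting at position `i`, as a word. -/
def fac (i n : ℕ) : List ℕ := (List.range n).map (fun k => tm (i + k))

lemma tm_lt_two (n : ℕ) : tm n < 2 := Nat.mod_lt _ (by norm_num)

lemma digits_len_le_of_lt_pow {b p : ℕ} (hb : b < 2 ^ p) :
    (Nat.digits 2 b).length ≤ p := by
  rcases Nat.eq_zero_or_pos b with rfl | hb0
  · simp
  · have h1 : 2 ^ (Nat.digits 2 b).length ≤ 2 * b :=
      Nat.base_pow_length_digits_le 2 b (by norm_num) hb0.ne'
    have h2 : 2 ^ (Nat.digits 2 b).length < 2 ^ (p + 1) := by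
      calc 2 ^ (Nat.digits 2 b).length ≤ 2 * b := h1
        _ < 2 * 2 ^ p := by omega
        _ = 2 ^ (p + 1) := by ring
    have := (Nat.pow_lt_pow_iff_right (by norm_num : 1 < 2)).mp h2
    omega

lemma tm_shift (a b p : ℕ) (hb : b < 2 ^ p) :
    tm (2 ^ p * a + b) = (tm a + tm b) % 2 := by
  rcases Nat.eq_zero_or_pos a with rfl | ha
  · simp [tm, Nat.mod_mod_of_dvd]
  · set L := (Nat.digits 2 b).length with hL
    have hLe : L ≤ p := digits_len_le_of_lt_pow hb
    have key : 2 ^ p * a + b = b + 2 ^ L * (2 ^ (p - L) * a) := by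
      rw [← mul_assoc, ← pow_add]
      rw [Nat.add_sub_cancel' hLe]
      ring
    rw [key]
    have hdig : Nat.digits 2 (b + 2 ^ L * (2 ^ (p - L) * a)) =
        Nat.digits 2 b ++ Nat.digits 2 (2 ^ (p - L) * a) := by
      rw [Nat.digits_append_digits (by norm_num : 0 < 2)]
    have hdig2 : Nat.digits 2 (2 ^ (p - L) * a) =
        List.replicate (p - L) 0 ++ Nat.digits 2 a :=
      Nat.digits_base_pow_mul (by norm_num) ha
    unfold tm
    rw [hdig, hdig2, List.sum_append, List.sum_append, List.sum_replicate]
    simp [Nat.add_mod, Nat.add_comm]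

/-- The Thue-Morse word is recurrent: every factor occurs infinitely often. -/
theorem tm_recurrent (i n N : ℕ) : ∃ j, N < j ∧ feq i j n := by
  set p := i + n with hp
  have hpow : i + n < 2 ^ p := Nat.lt_two_pow_self
  set a := 3 * 2 ^ N with ha
  have htma : tm a = 0 := by
    have := tm_shift 3 0 N (Nat.pow_pos (n := N) (by norm_num))
    simp only [Nat.add_zero] at this
    have h3 : tm 3 = 0 := by norm_num [tm]
    have h0 : tm 0 = 0 := by norm_num [tm]
    rw [h3, h0] at this
    have : tm (2 ^ N * 3) = 0 := this
    rwa [mul_comm] at this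
  refine ⟨2 ^ p * a + i, ?_, ?_⟩
  · have h1 : 2 ^ N ≥ N + 1 := Nat.lt_two_pow_self (n := N)
    have h2 : 2 ^ p ≥ 1 := Nat.one_le_two_pow
    have : 2 ^ p * a ≥ a := Nat.le_mul_of_pos_left a h2
    omega
  · intro k hk
    have hik : i + k < 2 ^ p := by omega
    have := tm_shift a (i + k) p hik
    rw [add_assoc, this, htma]
    have := tm_lt_two (i + k)
    omega
end

section
/- Occurrences of the factors 00 and 11 in the Thue-Morse word strictly alternate: between any two consecutive positions where 00 occurs (i.e., positions i with t(i)=t(i+1)=0), there is exactly one position where 11 occurs, and vice versa; moreover the first occurrence among {00,11} is an occurrence of 11. -/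
open scoped Classical

def occ00 (i : ℕ) : Prop := tm i = 0 ∧ tm (i + 1) = 0

def occ11 (i : ℕ) : Prop := tm i = 1 ∧ tm (i + 1) = 1

/-!
Since `t(2a+1) = 1 - t(a)` and `t(2a+2) = t(a+1)`, a factor `00` or `11` can only start at an odd
position `2a+1`, and it does exactly when `t(a) ≠ t(a+1)`; it is `11` if `t(a+1) = 1` and `00`
otherwise. Hence the number of occurrences of `11` minus the number of occurrences of `00` at
positions below `n` telescopes to `t(⌊n/2⌋) ∈ {0, 1}`. A counter confined to two adjacent values,
rising at each `11` and falling at each `00`, forces the two factors to alternate, and since it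
starts at its lower value the first step is a rise.
-/

open Finset

lemma tm_two_mul (n : ℕ) : tm (2 * n) = tm n := by
  rcases Nat.eq_zero_or_pos n with rfl | hn
  · rfl
  · rw [tm, ← zero_add (2 * n), Nat.digits_add 2 one_lt_two 0 n two_pos (.inr hn.ne'),
      List.sum_cons, zero_add, tm]

lemma tm_two_mul_add_one (n : ℕ) : tm (2 * n + 1) = 1 - tm n := by
  rw [tm, add_comm, Nat.digits_add 2 one_lt_two 1 n one_lt_two (.inl one_ne_zero),
    List.sum_cons, tm]
  omega

lemma tm_eq_zero_or_one (n : ℕ) : tm n = 0 ∨ tm n = 1 := by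
  have : tm n < 2 := Nat.mod_lt _ two_pos
  omega

noncomputable def balance (P Q : ℕ → Prop) (n : ℕ) : ℤ :=
  ∑ i ∈ range n, ((if P i then 1 else 0) - (if Q i then 1 else 0))

section Balance

variable {P Q : ℕ → Prop}

lemma balance_succ (n : ℕ) :
    balance P Q (n + 1) = balance P Q n + ((if P n then 1 else 0) - (if Q n then 1 else 0)) :=
  sum_range_succ _ _

lemma balance_swap (n : ℕ) : balance Q P n = -balance P Q n := by
  simp only [balance, ← sum_neg_distrib, neg_sub]

lemma balance_le_card (n : ℕ) : balance P Q n ≤ #{i ∈ range n | P i} := by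
  rw [balance, sum_sub_distrib, ← sum_boole]
  exact sub_le_self _ (sum_nonneg fun i _ => by positivity)

lemma balance_sub_balance {m n : ℕ} (h : m ≤ n) :
    balance P Q n - balance P Q m =
      ∑ i ∈ Ico m n, ((if P i then 1 else 0) - (if Q i then 1 else 0)) :=
  (sum_Ico_eq_sub _ h).symm

lemma balance_eq_of_right {c : ℤ} (hPQ : ∀ n, P n → ¬ Q n)
    (hb : ∀ n, balance P Q n = c ∨ balance P Q n = c + 1) {i : ℕ} (hi : Q i) :
    balance P Q i = c + 1 ∧ balance P Q (i + 1) = c := by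
  have := balance_succ (P := P) (Q := Q) i
  have hPi : ¬ P i := fun h => hPQ i h hi
  simp only [hi, hPi, if_true, if_false] at this
  rcases hb i with h | h <;> rcases hb (i + 1) with h' | h' <;> omega

lemma existsUnique_between_of_balance {c : ℤ} (hPQ : ∀ n, P n → ¬ Q n)
    (hb : ∀ n, balance P Q n = c ∨ balance P Q n = c + 1)
    {i j : ℕ} (hij : i < j) (hi : Q i) (hj : Q j)
    (hno : ∀ l, i < l → l < j → ¬ Q l) : ∃! k, i < k ∧ k < j ∧ P k := by
  have hcard : #{k ∈ Ico (i + 1) j | P k} = 1 := by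
    have hdiff := balance_sub_balance (P := P) (Q := Q) (Nat.succ_le_of_lt hij)
    have hnoQ : ∀ k ∈ Ico (i + 1) j,
        ((if P k then 1 else 0) - (if Q k then 1 else 0) : ℤ) = if P k then 1 else 0 := by
      intro k hk
      rw [mem_Ico] at hk
      simp [hno k (by omega) hk.2]
    rw [(balance_eq_of_right hPQ hb hi).2, (balance_eq_of_right hPQ hb hj).1,
      sum_congr rfl hnoQ, sum_boole] at hdiff
    omega
  rw [card_eq_one_iff_existsUnique] at hcard
  simpa only [mem_filter, mem_Ico, Nat.succ_le_iff, and_assoc] using hcard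

lemma exists_lt_of_balance {c : ℤ} (hPQ : ∀ n, P n → ¬ Q n)
    (hb : ∀ n, balance P Q n = c ∨ balance P Q n = c + 1) (hc : 0 ≤ c)
    {i : ℕ} (hi : Q i) : ∃ j < i, P j := by
  have hpos : 0 < #{j ∈ range i | P j} := by
    have := balance_le_card (P := P) (Q := Q) i
    rw [(balance_eq_of_right hPQ hb hi).1] at this
    omega
  obtain ⟨j, hj⟩ := card_pos.mp hpos
  rw [mem_filter, mem_range] at hj
  exact ⟨j, hj⟩

end Balance

lemma tm_two_mul_add_one_ne (a : ℕ) : tm (2 * a + 1) ≠ tm (2 * a) := by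
  rw [tm_two_mul_add_one, tm_two_mul]
  rcases tm_eq_zero_or_one a with h | h <;> simp [h]

lemma occ11_sub_occ00_two_mul_add_one (a : ℕ) :
    ((if occ11 (2 * a + 1) then 1 else 0) - (if occ00 (2 * a + 1) then 1 else 0) : ℤ) =
      tm (a + 1) - tm a := by
  rw [occ11, occ00, show 2 * a + 1 + 1 = 2 * (a + 1) by ring, tm_two_mul, tm_two_mul_add_one]
  rcases tm_eq_zero_or_one a with h | h <;> rcases tm_eq_zero_or_one (a + 1) with h' | h' <;>
    simp [h, h']

lemma balance_occ11_occ00 (n : ℕ) : balance occ11 occ00 n = tm (n / 2) := by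
  have hodd (a : ℕ) : balance occ11 occ00 (2 * a + 1) = balance occ11 occ00 (2 * a) := by
    have := tm_two_mul_add_one_ne a
    rw [balance_succ, if_neg fun h => this (h.1.trans h.2.symm).symm,
      if_neg fun h => this (h.1.trans h.2.symm).symm, sub_zero, add_zero]
  have heven (a : ℕ) : balance occ11 occ00 (2 * a) = tm a := by
    induction a with
    | zero => rfl
    | succ a ih =>
      rw [show 2 * (a + 1) = 2 * a + 1 + 1 by ring, balance_succ, hodd, ih,
        occ11_sub_occ00_two_mul_add_one]
      ring
  obtain ⟨a, rfl | rfl⟩ := Nat.even_or_odd' n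
  · rw [heven, Nat.mul_div_cancel_left a two_pos]
  · rw [hodd, heven, Nat.mul_add_div two_pos, Nat.div_eq_of_lt one_lt_two, add_zero]

/-- Occurrences of 00 and 11 in the Thue-Morse word strictly alternate:
between consecutive occurrences of 00 there is exactly one occurrence of 11,
and vice versa; the first occurrence among {00, 11} is an occurrence of 11. -/
theorem tm_00_11_alternate :
    (∀ i j, i < j → occ00 i → occ00 j → (∀ l, i < l → l < j → ¬ occ00 l) →
      ∃! k, i < k ∧ k < j ∧ occ11 k) ∧
    (∀ i j, i < j → occ11 i → occ11 j → (∀ l, i < l → l < j → ¬ occ11 l) →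
      ∃! k, i < k ∧ k < j ∧ occ00 k) ∧
    (∀ i, occ00 i ∨ occ11 i → ∃ j ≤ i, occ11 j) := by
  have hdisj (n : ℕ) (h11 : occ11 n) : ¬ occ00 n := fun h00 =>
    one_ne_zero (h11.1.symm.trans h00.1)
  have hb (n : ℕ) : balance occ11 occ00 n = 0 ∨ balance occ11 occ00 n = 0 + 1 := by
    rw [balance_occ11_occ00]
    rcases tm_eq_zero_or_one (n / 2) with h | h <;> simp [h]
  have hb' (n : ℕ) : balance occ00 occ11 n = -1 ∨ balance occ00 occ11 n = -1 + 1 := by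
    rw [balance_swap]
    have := hb n
    omega
  refine ⟨fun i j hij hi hj hno => existsUnique_between_of_balance hdisj hb hij hi hj hno,
    fun i j hij hi hj hno =>
      existsUnique_between_of_balance (fun n h00 h11 => hdisj n h11 h00) hb' hij hi hj hno, ?_⟩
  rintro i (hi | hi)
  · obtain ⟨j, hj, h11⟩ := exists_lt_of_balance hdisj hb le_rfl hi
    exact ⟨j, hj.le, h11⟩
  · exact ⟨i, le_rfl, hi⟩
end
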